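/- Suppose that a compact metric space X has covering dimension d < ∞ and let G ↷ X be a free continuous action of a countable discrete group which is coarsely almost finite. Then the action is d-almost finite. -/

import Mathlib

open Pointwise MeasureTheory
open scoped ENNReal NNReal

namespace Kerr

section Basic

variable (G : Type) [Group G] (X : Type) [TopologicalSpace X] [MulAction G X]

/-- The action of `G` on `X` is free. -/
def IsFreeAction : Prop := ∀ (g : G) (x : X), g • x = x → g = 1

/-- The action of `G` on `X` is minimal: there is no proper nonempty closed invariant subset. -/
def IsMinimalAction : Prop :=
  ∀ C : Set X, IsClosed C → (∀ g : G, g • C ⊆ C) → C = ∅ ∨ C = Set.univ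

/-- `X` is zero-dimensional: it has a basis of clopen sets. -/
def ZeroDimensional : Prop :=
  ∀ (x : X) (U : Set X), IsOpen U → x ∈ U → ∃ V : Set X, IsClopen V ∧ x ∈ V ∧ V ⊆ U

/-- The dynamical subequivalence relation `A ≺ₘ B`: every closed subset `C` of `A` admits a
finite open cover `U` together with group elements `s u` and an `(m+1)`-colouring such that
the translates `s u • u` are contained in `B` and are pairwise disjoint within each colour. -/
def SubEquivM (m : ℕ) (A B : Set X) : Prop :=
  ∀ C : Set X, IsClosed C → C ⊆ A →
    ∃ (U : Finset (Set X)) (s : Set X → G) (col : Set X → Fin (m + 1)),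
      (∀ u ∈ U, IsOpen u) ∧
      (C ⊆ ⋃ u ∈ U, u) ∧
      (∀ u ∈ U, s u • u ⊆ B) ∧
      (∀ u ∈ U, ∀ v ∈ U, u ≠ v → col u = col v → Disjoint (s u • u) (s v • v))

/-- `(V, S)` is a tower: the translates `s • V`, `s ∈ S`, are pairwise disjoint. -/
def IsTower (V : Set X) (S : Finset G) : Prop :=
  ∀ s ∈ S, ∀ t ∈ S, s ≠ t → Disjoint (s • V) (t • V)

/-- The union `S V` of the levels of the tower `(V, S)`. -/
def towerSpan (V : Set X) (S : Finset G) : Set X := ⋃ s ∈ S, s • V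

/-- A castle: a family of towers whose spans `Sᵢ Vᵢ` are pairwise disjoint. -/
def IsCastle {I : Type} (V : I → Set X) (S : I → Finset G) : Prop :=
  (∀ i, IsTower G X (V i) (S i)) ∧
  ∀ i j : I, i ≠ j →
    Disjoint (towerSpan G X (V i) (S i)) (towerSpan G X (V j) (S j))

/-- The collection of towers `{(Vᵢ, Sᵢ)}` covers `X`. -/
def TowersCover {I : Type} (V : I → Set X) (S : I → Finset G) : Prop :=
  (⋃ i, towerSpan G X (V i) (S i)) = Set.univ

/-- The collection of towers `{(Vᵢ, Sᵢ)}` is `E`-Lebesgue. -/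
def IsLebesgueTowers {I : Type} (E : Finset G) (V : I → Set X) (S : I → Finset G) : Prop :=
  ∀ x : X, ∃ i : I, ∃ t ∈ S i, x ∈ t • V i ∧ ∀ e ∈ E, e * t ∈ S i

/-- The family `{Sᵢ Vᵢ}` has chromatic number at most `d`. -/
def ChromaticLE {I : Type} (V : I → Set X) (S : I → Finset G) (d : ℕ) : Prop :=
  ∃ col : I → Fin d, ∀ i j : I, i ≠ j → col i = col j →
    Disjoint (towerSpan G X (V i) (S i)) (towerSpan G X (V j) (S j))

/-- `towdim(X, G) ≤ d`. -/
def TowDimLE (d : ℕ) : Prop :=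
  ∀ E : Finset G, ∃ (I : Type) (V : I → Set X) (S : I → Finset G),
    (∀ i, IsOpen (V i)) ∧ (∀ i, IsTower G X (V i) (S i)) ∧
    TowersCover G X V S ∧ IsLebesgueTowers G X E V S ∧ ChromaticLE G X V S (d + 1)

/-- The tower dimension of the action, with value `⊤` if it is infinite. -/
noncomputable def towdim : ℕ∞ := sInf {n : ℕ∞ | ∃ d : ℕ, n = (d : ℕ∞) ∧ TowDimLE G X d}

/-- A Borel measure on `X` is invariant under the `G`-action. -/
def InvariantMeasure [MeasurableSpace X] (μ : Measure X) : Prop :=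
  ∀ g : G, Measure.map (fun x : X => g • x) μ = μ

/-- The action has `m`-comparison. -/
def HasComparisonM [MeasurableSpace X] (m : ℕ) : Prop :=
  ∀ A B : Set X, IsOpen A → IsOpen B → A.Nonempty → B.Nonempty →
    (∀ μ : Measure X, IsProbabilityMeasure μ → InvariantMeasure G X μ → μ A < μ B) →
    SubEquivM G X m A B

/-- `μ` is an ergodic `G`-invariant Borel probability measure, i.e. an extreme point of the
convex set of invariant Borel probability measures. -/
def IsErgodicInvariant [MeasurableSpace X] (μ : Measure X) : Prop :=
  IsProbabilityMeasure μ ∧ InvariantMeasure G X μ ∧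
  ∀ (μ₁ μ₂ : Measure X) (t : ℝ≥0∞),
    IsProbabilityMeasure μ₁ → InvariantMeasure G X μ₁ →
    IsProbabilityMeasure μ₂ → InvariantMeasure G X μ₂ →
    0 < t → t < 1 → μ = t • μ₁ + (1 - t) • μ₂ → μ₁ = μ ∧ μ₂ = μ

end Basic

section Cov

variable (X : Type) [TopologicalSpace X]

/-- The Lebesgue covering dimension of `X` is at most `d`. -/
def CovDimLE (d : ℕ) : Prop :=
  ∀ U : Finset (Set X), (∀ u ∈ U, IsOpen u) → (⋃ u ∈ U, u) = Set.univ →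
    ∃ V : Finset (Set X), (∀ v ∈ V, IsOpen v) ∧ ((⋃ v ∈ V, v) = Set.univ) ∧
      (∀ v ∈ V, ∃ u ∈ U, v ⊆ u) ∧
      ∀ x : X, ({v : Set X | v ∈ V ∧ x ∈ v}).ncard ≤ d + 1

/-- The Lebesgue covering dimension of `X`, with value `⊤` if it is infinite. -/
noncomputable def covdim : ℕ∞ := sInf {n : ℕ∞ | ∃ d : ℕ, n = (d : ℕ∞) ∧ CovDimLE X d}

end Cov

section Folner

variable (G : Type) [Group G]

/-- `S` is a nonempty `(K, δ)`-invariant finite subset of `G`. -/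
def FolnerInv [DecidableEq G] (K : Finset G) (δ : ℝ) (S : Finset G) : Prop :=
  S.Nonempty ∧ ∀ s ∈ K, ((symmDiff (s • S) S).card : ℝ) < δ * (S.card : ℝ)

/-- `G` is amenable: it satisfies the Følner condition. -/
def AmenableFolner [DecidableEq G] : Prop :=
  ∀ (K : Finset G) (δ : ℝ), 0 < δ → ∃ S : Finset G, FolnerInv G K δ S

/-- The asymptotic dimension of `G` is at most `d`. -/
def AsDimLE (d : ℕ) : Prop :=
  ∀ E : Finset G, ∃ (𝒰 : Set (Set G)) (F : Finset G),
    (∀ g : G, {u : Set G | u ∈ 𝒰 ∧ g ∈ u}.Finite ∧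
      {u : Set G | u ∈ 𝒰 ∧ g ∈ u}.ncard ≤ d + 1) ∧
    (∀ u ∈ 𝒰, ∃ t : G, u ⊆ (fun f : G => f * t) '' (F : Set G)) ∧
    (∀ t : G, ∃ u ∈ 𝒰, (fun e : G => e * t) '' (E : Set G) ⊆ u)

/-- The asymptotic dimension of `G`, with value `⊤` if it is infinite. -/
noncomputable def asdim : ℕ∞ := sInf {n : ℕ∞ | ∃ d : ℕ, n = (d : ℕ∞) ∧ AsDimLE G d}

end Folner

section AmDimDad

variable (G : Type) [Group G] (X : Type) [TopologicalSpace X] [MulAction G X]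

/-- The amenability dimension of the action is at most `d`: for every finite `F ⊆ G` and
`ε > 0` there is a continuous map `φ : X → Δ_d(G) ⊆ ℓ¹(G)` which is `(F, ε)`-approximately
equivariant. -/
def AmDimLE (d : ℕ) : Prop :=
  ∀ (F : Finset G) (ε : ℝ), 0 < ε →
    ∃ φ : X → lp (fun _ : G => ℝ) 1,
      Continuous φ ∧
      (∀ (x : X) (t : G), 0 ≤ (φ x : ∀ _ : G, ℝ) t) ∧
      (∀ x : X, (∑' t : G, (φ x : ∀ _ : G, ℝ) t) = 1) ∧
      (∀ x : X, (Function.support (φ x : ∀ _ : G, ℝ)).Finite ∧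
        (Function.support (φ x : ∀ _ : G, ℝ)).ncard ≤ d + 1) ∧
      ∀ s ∈ F, ∀ x : X,
        (∑' t : G, |(φ (s • x) : ∀ _ : G, ℝ) t - (φ x : ∀ _ : G, ℝ) (s⁻¹ * t)|) < ε

/-- The amenability dimension, with value `⊤` if it is infinite. -/
noncomputable def amdim : ℕ∞ := sInf {n : ℕ∞ | ∃ d : ℕ, n = (d : ℕ∞) ∧ AmDimLE G X d}

/-- The dynamic asymptotic dimension of the action is at most `d`. -/
def DadLE (d : ℕ) : Prop :=
  ∀ E : Finset G, ∃ (F : Finset G) (U : Finset (Set X)),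
    (∀ u ∈ U, IsOpen u) ∧ U.card = d + 1 ∧ ((⋃ u ∈ U, u) = Set.univ) ∧
    ∀ u ∈ U, ∀ x ∈ u, ∀ l : List G, (∀ s ∈ l, s ∈ E) →
      (∀ k ≤ l.length, (l.take k).foldl (fun (y : X) (s : G) => s • y) x ∈ u) →
      (l.foldl (fun (g : G) (s : G) => s * g) 1) ∈ F

/-- The dynamic asymptotic dimension, with value `⊤` if it is infinite. -/
noncomputable def daddim : ℕ∞ := sInf {n : ℕ∞ | ∃ d : ℕ, n = (d : ℕ∞) ∧ DadLE G X d}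

end AmDimDad

section MetricDefs

variable (G : Type) [Group G] (X : Type) [MetricSpace X] [MulAction G X]

/-- The fine tower dimension of the action is at most `d`. -/
def FTowDimLE (d : ℕ) : Prop :=
  ∀ (E : Finset G) (δ : ℝ), 0 < δ →
    ∃ (I : Type) (V : I → Set X) (S : I → Finset G),
      (∀ i, IsOpen (V i)) ∧ (∀ i, IsTower G X (V i) (S i)) ∧
      TowersCover G X V S ∧ IsLebesgueTowers G X E V S ∧
      (∀ i, ∀ s ∈ S i, Metric.diam (s • V i) < δ) ∧
      ChromaticLE G X V S (d + 1)

/-- The fine tower dimension, with value `⊤` if it is infinite. -/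
noncomputable def ftowdim : ℕ∞ := sInf {n : ℕ∞ | ∃ d : ℕ, n = (d : ℕ∞) ∧ FTowDimLE G X d}

variable [DecidableEq G]

/-- The action is almost finite. -/
def AlmostFinite : Prop :=
  ∀ (n : ℕ) (K : Finset G) (δ : ℝ), 0 < n → 0 < δ →
    ∃ (I : Type) (_ : Fintype I) (V : I → Set X) (S S' : I → Finset G),
      (∀ i, IsOpen (V i)) ∧ IsCastle G X V S ∧
      (∀ i, FolnerInv G K δ (S i)) ∧
      (∀ i, ∀ s ∈ S i, Metric.diam (s • V i) < δ) ∧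
      (∀ i, S' i ⊆ S i) ∧
      (∀ i, ((S' i).card : ℝ) < ((S i).card : ℝ) / (n : ℝ)) ∧
      SubEquivM G X 0 (Set.univ \ ⋃ i, towerSpan G X (V i) (S i))
        (⋃ i, towerSpan G X (V i) (S' i))

/-- The action is `m`-almost finite. -/
def MAlmostFinite (m : ℕ) : Prop :=
  ∀ (n : ℕ) (K : Finset G) (δ : ℝ), 0 < n → 0 < δ →
    ∃ (I : Type) (V : I → Set X) (S S' : I → Finset G),
      (∀ i, IsOpen (V i)) ∧ (∀ i, IsTower G X (V i) (S i)) ∧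
      (∀ i, FolnerInv G K δ (S i)) ∧
      (∀ i, ∀ s ∈ S i, Metric.diam (s • V i) < δ) ∧
      ChromaticLE G X V S (m + 1) ∧
      (∀ i, S' i ⊆ S i) ∧
      (∀ i, ((S' i).card : ℝ) < ((S i).card : ℝ) / (n : ℝ)) ∧
      SubEquivM G X 0 (Set.univ \ ⋃ i, towerSpan G X (V i) (S i))
        (⋃ i, towerSpan G X (V i) (S' i))

/-- The action is coarsely almost finite. -/
def CoarselyAlmostFinite : Prop :=
  ∀ (n : ℕ) (K : Finset G) (δ : ℝ), 0 < n → 0 < δ →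
    ∃ (I : Type) (_ : Fintype I) (V : I → Set X) (S S' : I → Finset G),
      (∀ i, IsOpen (V i)) ∧ (∀ i, IsTower G X (V i) (S i)) ∧
      IsCastle G X (fun i => closure (V i)) S ∧
      (∀ i, FolnerInv G K δ (S i)) ∧
      (∀ i, S' i ⊆ S i) ∧
      (∀ i, ((S' i).card : ℝ) < ((S i).card : ℝ) / (n : ℝ)) ∧
      SubEquivM G X 0 (Set.univ \ ⋃ i, towerSpan G X (V i) (S i))
        (⋃ i, towerSpan G X (V i) (S' i))

end MetricDefs

section TypeSemigroup

variable (G : Type) [Group G] (X : Type) [TopologicalSpace X] [MulAction G X]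

/-- The elementary relation of dynamical equidecomposability on `C(X, ℤ≥0)`:
`f ∼ g` if `f = Σ hₖ` and `g = Σ α_{sₖ}(hₖ)` for continuous `hₖ : X → ℕ` and `sₖ ∈ G`. -/
def TypeRel (f g : X → ℕ) : Prop :=
  ∃ (n : ℕ) (h : Fin n → X → ℕ) (s : Fin n → G),
    (∀ k, Continuous (h k)) ∧
    (∀ x : X, (∑ k, h k x) = f x) ∧
    (∀ x : X, (∑ k, h k ((s k)⁻¹ • x)) = g x)

/-- The equivalence relation defining the clopen type semigroup `S(X, G)`. -/
def TypeEquiv : (X → ℕ) → (X → ℕ) → Prop := Relation.EqvGen (TypeRel G X)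

/-- The algebraic order on the type semigroup: `[f] ≤ [g]` iff `[f] + [h] = [g]` for some `h`. -/
def TypeLE (f g : X → ℕ) : Prop :=
  ∃ h : X → ℕ, Continuous h ∧ TypeEquiv G X (fun x => f x + h x) g

/-- The type semigroup `S(X, G)` is almost unperforated. -/
def TypeAlmostUnperforated : Prop :=
  ∀ f g : X → ℕ, Continuous f → Continuous g →
    ∀ n : ℕ, TypeLE G X (fun x => (n + 1) * f x) (fun x => n * g x) → TypeLE G X f g

end TypeSemigroup

end Kerr

/-!
Refine the castle of a coarsely almost finite witness by a small open cover of `X` whose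
members fall into `d + 1` colour classes of pairwise disjoint sets. Such a cover comes from
`dim X ≤ d`: refine a cover by small balls to one, `𝒱`, of multiplicity at most `d + 1`, and
for a nonempty `F ⊆ 𝒱` let `W_F` be the open set of points `x` at which every `v ∈ F` is
strictly deeper (in the sense of `infEDist x vᶜ`) than every `w ∈ 𝒱 \ F`. The `W_F` cover `X`
(take for `F` the members of maximal depth), `W_F ⊆ ⋂ F`, and `W_F`, `W_F'` are disjoint when
`|F| = |F'|` and `F ≠ F'`; so `|F|` colours them. The towers `(Vᵢ ∩ W_F, Sᵢ)` have the same
shapes, small levels by uniform continuity of the finitely many maps `x ↦ s • x`, colourwise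
disjoint spans, and together the same span as the original castle.
-/

namespace Kerr

open Set Metric

theorem covDimLE_of_covdim_eq {X : Type} [TopologicalSpace X] {d : ℕ}
    (h : covdim X = d) : CovDimLE X d := by
  have hne : {n : ℕ∞ | ∃ k : ℕ, n = k ∧ CovDimLE X k}.Nonempty := by
    by_contra hempty
    rw [not_nonempty_iff_eq_empty] at hempty
    rw [covdim, hempty, sInf_empty] at h
    exact ENat.top_ne_natCast d h
  obtain ⟨k, hk, hcov⟩ := csInf_mem hne
  have hkd : k = d := by exact_mod_cast hk.symm.trans h
  exact hkd ▸ hcov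

section DominantSet

variable {X : Type*} [PseudoEMetricSpace X]

def dominantSet (𝒱 F : Finset (Set X)) : Set X :=
  {x | F.Nonempty ∧ F ⊆ 𝒱 ∧
    ∀ v ∈ F, 0 < infEDist x vᶜ ∧ ∀ w ∈ 𝒱 \ F, infEDist x wᶜ < infEDist x vᶜ}

variable {𝒱 F F' : Finset (Set X)}

theorem isOpen_dominantSet (𝒱 F : Finset (Set X)) : IsOpen (dominantSet 𝒱 F) := by
  simp only [dominantSet, ofPred_and, ofPred_forall]
  refine isOpen_const.inter (isOpen_const.inter (isOpen_biInter_finset fun v _ => ?_))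
  refine (isOpen_lt continuous_const continuous_infEDist).inter
    (isOpen_biInter_finset fun w _ => isOpen_lt continuous_infEDist continuous_infEDist)

theorem dominantSet_subset {v : Set X} (hv : v ∈ F) : dominantSet 𝒱 F ⊆ v := by
  intro x hx
  by_contra hxv
  exact (hx.2.2 v hv).1.ne' (infEDist_zero_of_mem hxv)

theorem card_le_of_mem_dominantSet {d : ℕ} (hmult : ∀ x, {v | v ∈ 𝒱 ∧ x ∈ v}.ncard ≤ d + 1)
    {x : X} (hx : x ∈ dominantSet 𝒱 F) : F.card ≤ d + 1 := by
  have hsub : (F : Set (Set X)) ⊆ {v | v ∈ 𝒱 ∧ x ∈ v} := fun v hv =>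
    ⟨hx.2.1 hv, dominantSet_subset hv hx⟩
  calc F.card = (F : Set (Set X)).ncard := (ncard_coe_finset F).symm
    _ ≤ {v | v ∈ 𝒱 ∧ x ∈ v}.ncard := ncard_le_ncard hsub (𝒱.finite_toSet.subset fun _ hv => hv.1)
    _ ≤ d + 1 := hmult x

theorem eq_of_mem_dominantSet_of_card_eq {x : X} (hx : x ∈ dominantSet 𝒱 F)
    (hx' : x ∈ dominantSet 𝒱 F') (hcard : F.card = F'.card) : F = F' := by
  by_contra hne
  obtain ⟨v, hvF, hvF'⟩ := Finset.not_subset.mp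
    fun h => hne (Finset.eq_of_subset_of_card_le h hcard.ge)
  obtain ⟨w, hwF', hwF⟩ := Finset.not_subset.mp
    fun h => hne (Finset.eq_of_subset_of_card_le h hcard.le).symm
  have hvw := (hx.2.2 v hvF).2 w (Finset.mem_sdiff.mpr ⟨hx'.2.1 hwF', hwF⟩)
  have hwv := (hx'.2.2 w hwF').2 v (Finset.mem_sdiff.mpr ⟨hx.2.1 hvF, hvF'⟩)
  exact hvw.not_gt hwv

theorem exists_mem_dominantSet (hopen : ∀ v ∈ 𝒱, IsOpen v) (hcov : ⋃ v ∈ 𝒱, v = univ)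
    (x : X) : ∃ F, x ∈ dominantSet 𝒱 F := by
  classical
  obtain ⟨v₀, hv₀, hxv₀⟩ := mem_iUnion₂.mp (hcov ▸ mem_univ x)
  have hdepth₀ : 0 < infEDist x v₀ᶜ := by
    rw [infEDist_pos_iff_notMem_closure, (hopen v₀ hv₀).isClosed_compl.closure_eq]
    exact not_not.mpr hxv₀
  obtain ⟨vₘ, hvₘ, hmax⟩ := 𝒱.exists_max_image (fun v => infEDist x vᶜ) ⟨v₀, hv₀⟩
  refine ⟨𝒱.filter fun v => ∀ w ∈ 𝒱, infEDist x wᶜ ≤ infEDist x vᶜ,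
    ⟨vₘ, Finset.mem_filter.mpr ⟨hvₘ, hmax⟩⟩, Finset.filter_subset _ _, fun v hv => ?_⟩
  obtain ⟨-, hvmax⟩ := Finset.mem_filter.mp hv
  refine ⟨hdepth₀.trans_le (hvmax v₀ hv₀), fun w hw => ?_⟩
  obtain ⟨hw𝒱, hwF⟩ := Finset.mem_sdiff.mp hw
  simp only [Finset.mem_filter, hw𝒱, true_and, not_forall, not_le] at hwF
  obtain ⟨w', hw', hlt⟩ := hwF
  exact hlt.trans_le (hvmax w' hw')

theorem exists_colored_open_refinement (hopen : ∀ v ∈ 𝒱, IsOpen v)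
    (hcov : ⋃ v ∈ 𝒱, v = univ) {d : ℕ} (hmult : ∀ x, {v | v ∈ 𝒱 ∧ x ∈ v}.ncard ≤ d + 1) :
    ∃ (W : Finset (Set X) → Set X) (col : Finset (Set X) → Fin (d + 1)),
      (∀ F, IsOpen (W F)) ∧ (∀ x, ∃ F, x ∈ W F) ∧ (∀ F, ∀ x ∈ W F, ∃ v ∈ 𝒱, W F ⊆ v) ∧
      ∀ F F', F ≠ F' → col F = col F' → Disjoint (W F) (W F') := by
  refine ⟨dominantSet 𝒱, fun F => ⟨min (F.card - 1) d, Nat.lt_succ_of_le (min_le_right _ _)⟩,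
    isOpen_dominantSet 𝒱, exists_mem_dominantSet hopen hcov, fun F x hx => ?_,
    fun F F' hne hcol => disjoint_left.mpr fun x hx hx' => hne ?_⟩
  · obtain ⟨v, hv⟩ := hx.1
    exact ⟨v, hx.2.1 hv, dominantSet_subset hv⟩
  · have hmin : min (F.card - 1) d = min (F'.card - 1) d := congrArg Fin.val hcol
    have := card_le_of_mem_dominantSet hmult hx
    have := card_le_of_mem_dominantSet hmult hx'
    have := hx.1.card_pos
    have := hx'.1.card_pos
    exact eq_of_mem_dominantSet_of_card_eq hx hx' (by omega)

end DominantSet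

theorem exists_colored_small_open_cover {X : Type} [MetricSpace X] [CompactSpace X] {d : ℕ}
    (hX : CovDimLE X d) {ε : ℝ} (hε : 0 < ε) :
    ∃ (ι : Type) (W : ι → Set X) (col : ι → Fin (d + 1)),
      (∀ j, IsOpen (W j)) ∧ (∀ x, ∃ j, x ∈ W j) ∧
      (∀ j, ∀ a ∈ W j, ∀ b ∈ W j, dist a b < ε) ∧
      ∀ j j', j ≠ j' → col j = col j' → Disjoint (W j) (W j') := by
  classical
  obtain ⟨t, ht⟩ := isCompact_univ.elim_finite_subcover (fun x : X => ball x (ε / 2))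
    (fun _ => isOpen_ball) fun x _ => mem_iUnion.mpr ⟨x, mem_ball_self (half_pos hε)⟩
  obtain ⟨𝒱, h𝒱open, h𝒱cov, h𝒱ref, h𝒱mult⟩ :=
    hX (t.image fun x => ball x (ε / 2)) (by simp [isOpen_ball])
      (by rw [Finset.set_biUnion_finset_image]; exact univ_subset_iff.mp ht)
  obtain ⟨W, col, hWopen, hWcov, hWref, hWcol⟩ :=
    exists_colored_open_refinement h𝒱open h𝒱cov h𝒱mult
  refine ⟨_, W, col, hWopen, hWcov, fun F a ha b hb => ?_, hWcol⟩
  obtain ⟨v, hv, hWv⟩ := hWref F a ha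
  obtain ⟨u, hu, hvu⟩ := h𝒱ref v hv
  obtain ⟨c, -, rfl⟩ := Finset.mem_image.mp hu
  have hac : dist a c < ε / 2 := mem_ball.mp (hvu (hWv ha))
  have hbc : dist b c < ε / 2 := mem_ball.mp (hvu (hWv hb))
  linarith [dist_triangle_right a b c]

theorem exists_forall_dist_smul_lt {G X : Type*} [Group G] [MetricSpace X] [CompactSpace X]
    [MulAction G X] [ContinuousConstSMul G X] (T : Finset G) {η : ℝ} (hη : 0 < η) :
    ∃ ε > 0, ∀ s ∈ T, ∀ a b : X, dist a b < ε → dist (s • a) (s • b) < η := by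
  have hu : UniformContinuous fun (x : X) (s : T) => (s : G) • x :=
    CompactSpace.uniformContinuous_of_continuous (continuous_pi fun _ => continuous_const_smul _)
  obtain ⟨ε, hε, h⟩ := Metric.uniformContinuous_iff.mp hu η hη
  exact ⟨ε, hε, fun s hs a b hab => (dist_le_pi_dist _ _ ⟨s, hs⟩).trans_lt (h hab)⟩

section Towers

variable {G : Type} [Group G] {X : Type} [MulAction G X]

theorem towerSpan_mono {V W : Set X} {S : Finset G} (h : W ⊆ V) :
    towerSpan G X W S ⊆ towerSpan G X V S :=
  iUnion₂_mono fun _ _ => smul_set_mono h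

theorem IsTower.mono {V W : Set X} {S : Finset G} (hV : IsTower G X V S) (h : W ⊆ V) :
    IsTower G X W S :=
  fun s hs t ht hst => (hV s hs t ht hst).mono (smul_set_mono h) (smul_set_mono h)

theorem IsTower.disjoint_towerSpan {V A B : Set X} {S : Finset G} (hV : IsTower G X V S)
    (hA : A ⊆ V) (hB : B ⊆ V) (hAB : Disjoint A B) :
    Disjoint (towerSpan G X A S) (towerSpan G X B S) := by
  simp only [towerSpan, disjoint_iUnion_left, disjoint_iUnion_right]
  intro t ht s hs
  rcases eq_or_ne s t with rfl | hst
  · exact disjoint_smul_set.mpr hAB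
  · exact (hV s hs t ht hst).mono (smul_set_mono hA) (smul_set_mono hB)

variable {I J : Type}

theorem IsCastle.mono {V W : I → Set X} {S : I → Finset G} (hV : IsCastle G X V S)
    (h : ∀ i, W i ⊆ V i) : IsCastle G X W S :=
  ⟨fun i => (hV.1 i).mono (h i), fun i j hij =>
    (hV.2 i j hij).mono (towerSpan_mono (h i)) (towerSpan_mono (h j))⟩

theorem iUnion_towerSpan_inter {V : I → Set X} {W : J → Set X} (S : I → Finset G)
    (hW : ∀ x, ∃ j, x ∈ W j) :
    ⋃ p : I × J, towerSpan G X (V p.1 ∩ W p.2) (S p.1) = ⋃ i, towerSpan G X (V i) (S i) := by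
  refine (iUnion_subset fun p => ?_).antisymm ?_
  · exact (towerSpan_mono inter_subset_left).trans (subset_iUnion_of_subset p.1 subset_rfl)
  · simp only [towerSpan, iUnion_subset_iff, smul_set_subset_iff]
    intro i s hs x hx
    obtain ⟨j, hxj⟩ := hW x
    exact mem_iUnion.mpr ⟨(i, j), mem_iUnion₂.mpr ⟨s, hs, smul_mem_smul_set ⟨hx, hxj⟩⟩⟩

theorem IsCastle.chromaticLE_inter {V : I → Set X} {S : I → Finset G} (hV : IsCastle G X V S)
    {W : J → Set X} {m : ℕ} {col : J → Fin m}
    (hcol : ∀ j j', j ≠ j' → col j = col j' → Disjoint (W j) (W j')) :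
    ChromaticLE G X (fun p : I × J => V p.1 ∩ W p.2) (fun p => S p.1) m := by
  refine ⟨fun p => col p.2, fun ⟨i, j⟩ ⟨i', j'⟩ hne hc => ?_⟩
  rcases eq_or_ne i i' with rfl | hii'
  · have hjj' : j ≠ j' := fun h => hne (h ▸ rfl)
    exact (hV.1 i).disjoint_towerSpan inter_subset_left inter_subset_left
      ((hcol j j' hjj' hc).mono inter_subset_right inter_subset_right)
  · exact (hV.2 i i' hii').mono (towerSpan_mono inter_subset_left)
      (towerSpan_mono inter_subset_left)

end Towers

theorem mAlmostFinite_of_coarselyAlmostFinite_general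
    (G X : Type) [Group G] [DecidableEq G]
    [MetricSpace X] [CompactSpace X]
    [MulAction G X] [ContinuousConstSMul G X]
    (d : ℕ) (hd : covdim X = (d : ℕ∞))
    (hcaf : CoarselyAlmostFinite G X) :
    MAlmostFinite G X d := by
  intro n K δ hn hδ
  obtain ⟨I, _, V, S, S', hopen, -, hcastle, hfol, hS', hcard, hsub⟩ := hcaf n K δ hn hδ
  have hcastle : IsCastle G X V S := hcastle.mono fun i => subset_closure
  obtain ⟨ε, hε, hunif⟩ := exists_forall_dist_smul_lt (X := X) (Finset.univ.biUnion S) (half_pos hδ)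
  obtain ⟨J, W, col, hWopen, hWcov, hWsmall, hWcol⟩ :=
    exists_colored_small_open_cover (covDimLE_of_covdim_eq hd) hε
  refine ⟨I × J, fun p => V p.1 ∩ W p.2, fun p => S p.1, fun p => S' p.1,
    fun p => (hopen p.1).inter (hWopen p.2), fun p => (hcastle.1 p.1).mono inter_subset_left,
    fun p => hfol p.1, ?_, hcastle.chromaticLE_inter hWcol, fun p => hS' p.1,
    fun p => hcard p.1, ?_⟩
  · rintro ⟨i, j⟩ s hs
    have hsT : s ∈ Finset.univ.biUnion S := Finset.mem_biUnion.mpr ⟨i, Finset.mem_univ i, hs⟩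
    refine (diam_le_of_forall_dist_le (half_pos hδ).le ?_).trans_lt (half_lt_self hδ)
    rintro _ ⟨a, ha, rfl⟩ _ ⟨b, hb, rfl⟩
    exact (hunif s hsT a b (hWsmall j a ha.2 b hb.2)).le
  · rw [iUnion_towerSpan_inter S hWcov, iUnion_towerSpan_inter S' hWcov]
    exact hsub

/-- Lemma 11.5: a coarsely almost finite free action on a compact metric space
of covering dimension `d` is `d`-almost finite. -/
theorem mAlmostFinite_of_coarselyAlmostFinite
    (G X : Type) [Group G] [Countable G] [DecidableEq G]
    [MetricSpace X] [CompactSpace X]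
    [MulAction G X] [ContinuousConstSMul G X]
    (hfree : IsFreeAction G X)
    (d : ℕ) (hd : covdim X = (d : ℕ∞))
    (hcaf : CoarselyAlmostFinite G X) :
    MAlmostFinite G X d :=
  mAlmostFinite_of_coarselyAlmostFinite_general G X d hd hcaf

end Kerr
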